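/- Let K_{s,t} be the complete bipartite graph with parts of sizes s and t. Then Q(K_{s,t}, x) = Σ_{i=0}^{s} Σ_{j=0}^{s−i} Σ_{k=0}^{t−j} C(s,i)·C(t,k)·S(s−i,j)·S(t−k,j)·j! · x^{i+j+k}, where C(a,b) is the binomial coefficient and S(a,b) is the Stirling number of the second kind. -/

import Mathlib

open Finset

variable {V : Type*} [Fintype V] [DecidableEq V]

/-- `P` is a set partition of the vertex set `V`, given as a finset of (nonempty,
pairwise disjoint, covering) blocks. -/
def IsPartition (P : Finset (Finset V)) : Prop :=
  ∅ ∉ P ∧ ∀ v : V, ∃! B : Finset V, B ∈ P ∧ v ∈ B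

/-- `P` is a connected set partition of `G`: every block induces a connected subgraph. -/
def IsConnPartition (G : SimpleGraph V) (P : Finset (Finset V)) : Prop :=
  IsPartition P ∧ ∀ B ∈ P, (G.induce (B : Set V)).Connected

open scoped Classical in
/-- The finset of all connected set partitions (`Π_c(G)`). -/
noncomputable def connParts (G : SimpleGraph V) : Finset (Finset (Finset V)) :=
  Finset.univ.filter (IsConnPartition G)

open scoped Classical in
/-- The partition polynomial `Q(G,x) = Σ_{π ∈ Π_c(G)} x^{|π|}`, evaluated at `x : ℤ`. -/
noncomputable def Q (G : SimpleGraph V) (x : ℤ) : ℤ :=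
  ∑ P ∈ connParts G, x ^ P.card

open scoped Classical in
/-- The Stirling number of the second kind `S(a,b)`: the number of set partitions of
an `a`-element set into exactly `b` blocks (so `S(0,0) = 1`). -/
noncomputable def stirlingSnd (a b : ℕ) : ℕ :=
  (Finset.univ.filter
    (fun P : Finset (Finset (Fin a)) => IsPartition P ∧ P.card = b)).card

/-!
In `K_{s,t}` a vertex set induces a connected subgraph iff it is a single vertex or meets both
sides. A connected partition therefore consists of singleton blocks on some set of vertices, `i`
on the left and `k` on the right, and a partition of the remaining vertices into `j` blocks that
meet both sides. The latter is determined by its left traces (a partition of the other `s - i`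
left vertices into `j` blocks), its right traces (likewise for the `t - k` right vertices) and
the bijection matching the two traces of each block, and every such triple occurs. Hence there
are `C(s,i) C(t,k) S(s-i,j) S(t-k,j) j!` connected partitions with `i + j + k` blocks of this
shape.
-/

lemma Finset.existsUnique_mem_map {γ δ : Type*} {g : γ ↪ δ} {s : Finset γ} {q : δ → Prop} :
    (∃! y, y ∈ s.map g ∧ q y) ↔ ∃! x, x ∈ s ∧ q (g x) := by
  constructor
  · rintro ⟨_, ⟨hy, hq⟩, huniq⟩
    obtain ⟨x, hx, rfl⟩ := mem_map.1 hy
    exact ⟨x, ⟨hx, hq⟩, fun x' hx' => g.injective (huniq _ ⟨mem_map_of_mem g hx'.1, hx'.2⟩)⟩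
  · rintro ⟨x, ⟨hx, hq⟩, huniq⟩
    refine ⟨g x, ⟨mem_map_of_mem g hx, hq⟩, ?_⟩
    rintro _ ⟨hy, hq'⟩
    obtain ⟨x', hx', rfl⟩ := mem_map.1 hy
    rw [huniq x' ⟨hx', hq'⟩]

lemma Finset.bijective_restrict_image {ι κ : Type*} [DecidableEq κ] {s : Finset ι} {f : ι → κ}
    (hf : Set.InjOn f s) :
    Function.Bijective fun x : s => (⟨f x, mem_image_of_mem f x.2⟩ : s.image f) := by
  refine ⟨fun x y h => Subtype.ext (hf x.2 y.2 (congrArg Subtype.val h)), fun y => ?_⟩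
  obtain ⟨x, hx, hy⟩ := mem_image.1 y.2
  exact ⟨⟨x, hx⟩, Subtype.ext hy⟩

lemma Finset.compl_disjSum {α β : Type*} [Fintype α] [Fintype β] [DecidableEq α] [DecidableEq β]
    (A : Finset α) (C : Finset β) : (A.disjSum C)ᶜ = Aᶜ.disjSum Cᶜ := by
  ext (a | b) <;> simp

section Partitions

variable {α β : Type*}

def IsPartitionOn (U : Finset α) (P : Finset (Finset α)) : Prop :=
  ∅ ∉ P ∧ (∀ B ∈ P, B ⊆ U) ∧ ∀ v ∈ U, ∃! B, B ∈ P ∧ v ∈ B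

lemma isPartition_iff_isPartitionOn_univ [Fintype α] {P : Finset (Finset α)} :
    IsPartition P ↔ IsPartitionOn univ P := by
  simp [IsPartition, IsPartitionOn]

lemma isPartitionOn_image_singleton [DecidableEq α] (U : Finset α) :
    IsPartitionOn U (U.image singleton) := by
  refine ⟨by simp, by simp, fun v hv => ⟨{v}, by simp [hv], ?_⟩⟩
  simp only [mem_image, and_imp, forall_exists_index]
  rintro _ w - rfl hv
  rw [mem_singleton.1 hv]

namespace IsPartitionOn

variable {U U' : Finset α} {P P' : Finset (Finset α)}

lemma eq_of_mem (hP : IsPartitionOn U P) {B B' : Finset α} {v : α} (hB : B ∈ P) (hB' : B' ∈ P)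
    (hv : v ∈ B) (hv' : v ∈ B') : B = B' :=
  (hP.2.2 v (hP.2.1 B hB hv)).unique ⟨hB, hv⟩ ⟨hB', hv'⟩

lemma card_le [DecidableEq α] (hP : IsPartitionOn U P) : #P ≤ #U :=
  (Finpartition.ofExistsUnique P hP.2.1 hP.2.2 hP.1).card_parts_le_card

lemma existsUnique_mem_union [DecidableEq α] (hP : IsPartitionOn U P) (hP' : IsPartitionOn U' P')
    (hU : Disjoint U U') {v : α} (hv : v ∈ U) : ∃! B, B ∈ P ∪ P' ∧ v ∈ B := by
  obtain ⟨B, ⟨hB, hvB⟩, huniq⟩ := hP.2.2 v hv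
  refine ⟨B, ⟨mem_union_left _ hB, hvB⟩, fun B' ⟨hB', hvB'⟩ => ?_⟩
  rcases mem_union.1 hB' with hB' | hB'
  · exact huniq B' ⟨hB', hvB'⟩
  · exact absurd (hP'.2.1 B' hB' hvB') (disjoint_left.1 hU hv)

lemma union [DecidableEq α] (hP : IsPartitionOn U P) (hP' : IsPartitionOn U' P')
    (hU : Disjoint U U') : IsPartitionOn (U ∪ U') (P ∪ P') := by
  refine ⟨by simp [hP.1, hP'.1], ?_, fun v hv => ?_⟩
  · simp only [mem_union]
    rintro B (hB | hB)
    exacts [(hP.2.1 B hB).trans subset_union_left, (hP'.2.1 B hB).trans subset_union_right]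
  · rcases mem_union.1 hv with hv | hv
    · exact hP.existsUnique_mem_union hP' hU hv
    · simpa only [union_comm P] using hP'.existsUnique_mem_union hP hU.symm hv

lemma map_iff (f : α ↪ β) :
    IsPartitionOn (U.map f) (P.map (mapEmbedding f).toEmbedding) ↔ IsPartitionOn U P := by
  simp only [IsPartitionOn]
  refine and_congr (by simp) (and_congr (by simp) ?_)
  simp only [forall_mem_map, existsUnique_mem_map]
  simp

end IsPartitionOn

variable [Fintype α] [Fintype β]

open scoped Classical in
noncomputable def partitionsOn (U : Finset α) (j : ℕ) : Finset (Finset (Finset α)) :=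
  {P | IsPartitionOn U P ∧ #P = j}

lemma mem_partitionsOn {U : Finset α} {j : ℕ} {P : Finset (Finset α)} :
    P ∈ partitionsOn U j ↔ IsPartitionOn U P ∧ #P = j := by
  simp [partitionsOn]

lemma partitionsOn_map (f : α ↪ β) (U : Finset α) (j : ℕ) :
    partitionsOn (U.map f) j
      = (partitionsOn U j).map (mapEmbedding (mapEmbedding f).toEmbedding).toEmbedding := by
  ext P'
  simp only [mem_map, mem_partitionsOn]
  constructor
  · rintro ⟨hP', rfl⟩
    have hsub : P' ⊆ univ.map (mapEmbedding f).toEmbedding := fun B hB => by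
      obtain ⟨u, -, rfl⟩ :=
        subset_map_iff.1 ((hP'.2.1 B hB).trans (map_subset_map.2 (subset_univ U)))
      exact mem_map_of_mem _ (mem_univ u)
    obtain ⟨P, -, rfl⟩ := subset_map_iff.1 hsub
    exact ⟨P, ⟨(IsPartitionOn.map_iff f).1 hP', by simp⟩, rfl⟩
  · rintro ⟨P, ⟨hP, rfl⟩, rfl⟩
    exact ⟨(IsPartitionOn.map_iff f).2 hP, by simp⟩

lemma card_partitionsOn (U : Finset α) (j : ℕ) : #(partitionsOn U j) = stirlingSnd #U j := by
  let f : Fin #U ↪ α := U.equivFin.symm.toEmbedding.trans (Function.Embedding.subtype _)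
  have hf : univ.map f = U := by
    rw [← map_map, univ_map_equiv_to_embedding, univ_eq_attach, attach_map_val]
  have hmap := partitionsOn_map f univ j
  rw [hf] at hmap
  rw [hmap, card_map, stirlingSnd]
  congr 1
  ext P
  simp [mem_partitionsOn, isPartition_iff_isPartitionOn_univ]

end Partitions

lemma stirlingSnd_eq_zero_of_lt {a b : ℕ} (h : a < b) : stirlingSnd a b = 0 := by
  have hcard := card_partitionsOn (univ : Finset (Fin a)) b
  rw [card_univ, Fintype.card_fin] at hcard
  rw [← hcard, card_eq_zero, eq_empty_iff_forall_notMem]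
  intro P hP
  obtain ⟨hP', rfl⟩ := mem_partitionsOn.1 hP
  exact (hP'.card_le.trans_lt (by simpa using h)).false

section TwoSided

variable {α β : Type*}

def IsTwoSided (B : Finset (α ⊕ β)) : Prop := B.toLeft.Nonempty ∧ B.toRight.Nonempty

instance : DecidablePred (IsTwoSided : Finset (α ⊕ β) → Prop) :=
  fun _ => inferInstanceAs (Decidable (_ ∧ _))

lemma not_isTwoSided_singleton (v : α ⊕ β) : ¬IsTwoSided {v} := by
  rintro ⟨⟨a, ha⟩, ⟨b, hb⟩⟩
  rw [mem_toLeft, mem_singleton] at ha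
  rw [mem_toRight, mem_singleton] at hb
  exact Sum.inl_ne_inr (ha.trans hb.symm)

open scoped Classical in
noncomputable def twoSidedPartitionsOn [Fintype α] [Fintype β] (U : Finset (α ⊕ β)) (j : ℕ) :
    Finset (Finset (Finset (α ⊕ β))) :=
  {M | IsPartitionOn U M ∧ (∀ B ∈ M, IsTwoSided B) ∧ #M = j}

lemma mem_twoSidedPartitionsOn [Fintype α] [Fintype β] {U : Finset (α ⊕ β)} {j : ℕ}
    {M : Finset (Finset (α ⊕ β))} :
    M ∈ twoSidedPartitionsOn U j ↔ IsPartitionOn U M ∧ (∀ B ∈ M, IsTwoSided B) ∧ #M = j := by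
  simp [twoSidedPartitionsOn]

namespace IsPartitionOn

variable {U : Finset (α ⊕ β)} {M : Finset (Finset (α ⊕ β))}

lemma image_toLeft [DecidableEq α] (hM : IsPartitionOn U M) (h : ∀ B ∈ M, B.toLeft.Nonempty) :
    IsPartitionOn U.toLeft (M.image toLeft) := by
  refine ⟨?_, ?_, fun a ha => ?_⟩
  · simp only [mem_image, not_exists, not_and]
    exact fun B hB hB0 => (h B hB).ne_empty hB0
  · simp only [mem_image, forall_exists_index, and_imp, forall_apply_eq_imp_iff₂]
    exact fun B hB => toLeft_subset_toLeft (hM.2.1 B hB)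
  · obtain ⟨B, ⟨hB, haB⟩, -⟩ := hM.2.2 _ (mem_toLeft.1 ha)
    refine ⟨B.toLeft, ⟨mem_image_of_mem _ hB, mem_toLeft.2 haB⟩, ?_⟩
    rintro _ ⟨hB', haB'⟩
    obtain ⟨B', hB'M, rfl⟩ := mem_image.1 hB'
    rw [hM.eq_of_mem hB'M hB (mem_toLeft.1 haB') haB]

lemma image_toRight [DecidableEq β] (hM : IsPartitionOn U M)
    (h : ∀ B ∈ M, B.toRight.Nonempty) : IsPartitionOn U.toRight (M.image toRight) := by
  refine ⟨?_, ?_, fun b hb => ?_⟩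
  · simp only [mem_image, not_exists, not_and]
    exact fun B hB hB0 => (h B hB).ne_empty hB0
  · simp only [mem_image, forall_exists_index, and_imp, forall_apply_eq_imp_iff₂]
    exact fun B hB => toRight_subset_toRight (hM.2.1 B hB)
  · obtain ⟨B, ⟨hB, hbB⟩, -⟩ := hM.2.2 _ (mem_toRight.1 hb)
    refine ⟨B.toRight, ⟨mem_image_of_mem _ hB, mem_toRight.2 hbB⟩, ?_⟩
    rintro _ ⟨hB', hbB'⟩
    obtain ⟨B', hB'M, rfl⟩ := mem_image.1 hB'
    rw [hM.eq_of_mem hB'M hB (mem_toRight.1 hbB') hbB]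

lemma injOn_toLeft (hM : IsPartitionOn U M) (h : ∀ B ∈ M, B.toLeft.Nonempty) :
    Set.InjOn toLeft (M : Set (Finset (α ⊕ β))) := by
  intro B hB B' hB' hBB'
  obtain ⟨a, ha⟩ := h B hB
  exact hM.eq_of_mem hB hB' (mem_toLeft.1 ha) (mem_toLeft.1 (hBB' ▸ ha))

lemma injOn_toRight (hM : IsPartitionOn U M) (h : ∀ B ∈ M, B.toRight.Nonempty) :
    Set.InjOn toRight (M : Set (Finset (α ⊕ β))) := by
  intro B hB B' hB' hBB'
  obtain ⟨b, hb⟩ := h B hB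
  exact hM.eq_of_mem hB hB' (mem_toRight.1 hb) (mem_toRight.1 (hBB' ▸ hb))

end IsPartitionOn

variable [DecidableEq α] [DecidableEq β] {P₁ : Finset (Finset α)} {P₂ : Finset (Finset β)}

def pairBlocks (e : P₁ ≃ P₂) : Finset (Finset (α ⊕ β)) :=
  P₁.attach.image fun b => b.1.disjSum (e b).1

variable (e : P₁ ≃ P₂)

lemma mem_pairBlocks {B : Finset (α ⊕ β)} :
    B ∈ pairBlocks e ↔ ∃ b : P₁, b.1.disjSum (e b).1 = B := by
  simp [pairBlocks]

lemma card_pairBlocks : #(pairBlocks e) = #P₁ := by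
  rw [pairBlocks, card_image_of_injective _ fun b b' h => Subtype.ext (disjSum_inj.1 h).1,
    card_attach]

lemma image_toLeft_pairBlocks : (pairBlocks e).image toLeft = P₁ := by
  simp [pairBlocks, image_image, Function.comp_def]

lemma image_toRight_pairBlocks : (pairBlocks e).image toRight = P₂ := by
  ext b
  simp only [pairBlocks, image_image, Function.comp_def, toRight_disjSum, mem_image, mem_attach,
    true_and]
  exact ⟨fun ⟨b', hb'⟩ => hb' ▸ (e b').2, fun hb => ⟨e.symm ⟨b, hb⟩, by simp⟩⟩

lemma isTwoSided_of_mem_pairBlocks (h₁ : ∅ ∉ P₁) (h₂ : ∅ ∉ P₂) {B : Finset (α ⊕ β)}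
    (hB : B ∈ pairBlocks e) : IsTwoSided B := by
  obtain ⟨b, rfl⟩ := (mem_pairBlocks e).1 hB
  simp only [IsTwoSided, toLeft_disjSum, toRight_disjSum, nonempty_iff_ne_empty]
  exact ⟨ne_of_mem_of_not_mem b.2 h₁, ne_of_mem_of_not_mem (e b).2 h₂⟩

lemma isPartitionOn_pairBlocks {X : Finset α} {Y : Finset β} (h₁ : IsPartitionOn X P₁)
    (h₂ : IsPartitionOn Y P₂) : IsPartitionOn (X.disjSum Y) (pairBlocks e) := by
  refine ⟨fun h => ?_, fun B hB => ?_, ?_⟩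
  · obtain ⟨b, hb⟩ := (mem_pairBlocks e).1 h
    exact h₁.1 ((disjSum_eq_empty.1 hb).1 ▸ b.2)
  · obtain ⟨b, rfl⟩ := (mem_pairBlocks e).1 hB
    exact disjSum_mono (h₁.2.1 _ b.2) (h₂.2.1 _ (e b).2)
  rintro (a | c) hv
  · obtain ⟨b, ⟨hb, hab⟩, -⟩ := h₁.2.2 a (inl_mem_disjSum.1 hv)
    refine ⟨_, ⟨(mem_pairBlocks e).2 ⟨⟨b, hb⟩, rfl⟩, inl_mem_disjSum.2 hab⟩, ?_⟩
    rintro _ ⟨hB, haB⟩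
    obtain ⟨b', rfl⟩ := (mem_pairBlocks e).1 hB
    obtain rfl : b' = ⟨b, hb⟩ := Subtype.ext (h₁.eq_of_mem b'.2 hb (inl_mem_disjSum.1 haB) hab)
    rfl
  · obtain ⟨d, ⟨hd, hcd⟩, -⟩ := h₂.2.2 c (inr_mem_disjSum.1 hv)
    refine ⟨_, ⟨(mem_pairBlocks e).2 ⟨e.symm ⟨d, hd⟩, rfl⟩, inr_mem_disjSum.2 (by simpa)⟩, ?_⟩
    rintro _ ⟨hB, hcB⟩
    obtain ⟨b', rfl⟩ := (mem_pairBlocks e).1 hB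
    have he : e b' = ⟨d, hd⟩ :=
      Subtype.ext (h₂.eq_of_mem (e b').2 hd (inr_mem_disjSum.1 hcB) hcd)
    rw [← he, e.symm_apply_apply]

lemma injective_pairBlocks : Function.Injective (pairBlocks : (P₁ ≃ P₂) → _) := by
  intro e e' h
  ext b : 2
  obtain ⟨b', hb'⟩ := (mem_pairBlocks e').1 (h ▸ (mem_pairBlocks e).2 ⟨b, rfl⟩)
  obtain ⟨hbb', hee'⟩ := disjSum_inj.1 hb'
  obtain rfl : b' = b := Subtype.ext hbb'
  exact hee'.symm

-- `e` sends the left trace of each block of `M` to its right trace.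
lemma exists_pairBlocks_eq {U : Finset (α ⊕ β)} {M : Finset (Finset (α ⊕ β))}
    (hM : IsPartitionOn U M) (hM₂ : ∀ B ∈ M, IsTwoSided B) (hP₁ : M.image toLeft = P₁)
    (hP₂ : M.image toRight = P₂) : ∃ e : P₁ ≃ P₂, pairBlocks e = M := by
  subst hP₁ hP₂
  let L := Equiv.ofBijective _
    (bijective_restrict_image (hM.injOn_toLeft fun B hB => (hM₂ B hB).1))
  let R := Equiv.ofBijective _
    (bijective_restrict_image (hM.injOn_toRight fun B hB => (hM₂ B hB).2))
  refine ⟨L.symm.trans R, ?_⟩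
  ext B
  rw [mem_pairBlocks, L.symm.exists_congr_left]
  simp [L, R, toLeft_disjSum_toRight]

variable [Fintype α] [Fintype β]

lemma card_filter_twoSidedPartitionsOn_image_eq {X : Finset α} {Y : Finset β} {j : ℕ}
    (hP₁ : P₁ ∈ partitionsOn X j) (hP₂ : P₂ ∈ partitionsOn Y j) :
    #{M ∈ twoSidedPartitionsOn (X.disjSum Y) j | M.image toLeft = P₁ ∧ M.image toRight = P₂}
      = j.factorial := by
  rw [mem_partitionsOn] at hP₁ hP₂
  have hcard : Fintype.card P₁ = Fintype.card P₂ := by simp [hP₁.2, hP₂.2]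
  calc _ = #(univ : Finset (P₁ ≃ P₂)) := by
        refine (card_bij (fun e _ => pairBlocks e) (fun e _ => ?_)
          (fun e _ e' _ h => injective_pairBlocks h) (fun M hM => ?_)).symm
        · simp only [mem_filter, mem_twoSidedPartitionsOn]
          exact ⟨⟨isPartitionOn_pairBlocks e hP₁.1 hP₂.1,
            fun _ => isTwoSided_of_mem_pairBlocks e hP₁.1.1 hP₂.1.1,
            by rw [card_pairBlocks, hP₁.2]⟩, image_toLeft_pairBlocks e, image_toRight_pairBlocks e⟩
        · simp only [mem_filter, mem_twoSidedPartitionsOn] at hM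
          obtain ⟨e, he⟩ := exists_pairBlocks_eq hM.1.1 hM.1.2.1 hM.2.1 hM.2.2
          exact ⟨e, mem_univ e, he⟩
    _ = j.factorial := by
      rw [card_univ, Fintype.card_equiv (Fintype.equivOfCardEq hcard), Fintype.card_coe, hP₁.2]

theorem card_twoSidedPartitionsOn (U : Finset (α ⊕ β)) (j : ℕ) :
    #(twoSidedPartitionsOn U j)
      = stirlingSnd #U.toLeft j * stirlingSnd #U.toRight j * j.factorial := by
  have hmaps : ∀ M ∈ twoSidedPartitionsOn U j, (M.image toLeft, M.image toRight) ∈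
      partitionsOn U.toLeft j ×ˢ partitionsOn U.toRight j := by
    intro M hM
    obtain ⟨hMU, hM₂, rfl⟩ := mem_twoSidedPartitionsOn.1 hM
    simp only [mem_product, mem_partitionsOn]
    exact ⟨⟨hMU.image_toLeft fun B hB => (hM₂ B hB).1, card_image_of_injOn
        (hMU.injOn_toLeft fun B hB => (hM₂ B hB).1)⟩,
      ⟨hMU.image_toRight fun B hB => (hM₂ B hB).2, card_image_of_injOn
        (hMU.injOn_toRight fun B hB => (hM₂ B hB).2)⟩⟩
  rw [card_eq_sum_card_fiberwise hmaps, sum_const_nat (m := j.factorial), card_product,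
    card_partitionsOn, card_partitionsOn]
  rintro ⟨P₁, P₂⟩ hP
  rw [mem_product] at hP
  conv_lhs => rw [← toLeft_disjSum_toRight (u := U)]
  simpa only [Prod.mk.injEq] using card_filter_twoSidedPartitionsOn_image_eq hP.1 hP.2

end TwoSided

section CompleteBipartite

variable {α β : Type*}

lemma induce_completeBipartiteGraph_connected_iff {B : Finset (α ⊕ β)} :
    ((completeBipartiteGraph α β).induce (B : Set (α ⊕ β))).Connected ↔
      (∃ v, B = {v}) ∨ IsTwoSided B := by
  by_cases hB : IsTwoSided B
  · simp only [hB, or_true, iff_true]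
    obtain ⟨⟨a, ha⟩, ⟨b, hb⟩⟩ := hB
    rw [mem_toLeft] at ha
    rw [mem_toRight] at hb
    refine (SimpleGraph.connected_iff_exists_forall_reachable _).2 ⟨⟨.inr b, hb⟩, ?_⟩
    have hadj : ∀ a' (ha' : .inl a' ∈ B),
        ((completeBipartiteGraph α β).induce (B : Set (α ⊕ β))).Adj ⟨.inr b, hb⟩ ⟨.inl a', ha'⟩ :=
      fun _ _ => Or.inr ⟨rfl, rfl⟩
    rintro ⟨a' | b', hv⟩
    · exact (hadj a' hv).reachable
    · exact (hadj a ha).reachable.trans (SimpleGraph.Adj.reachable (Or.inl ⟨rfl, rfl⟩))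
  · have hbot : (completeBipartiteGraph α β).induce (B : Set (α ⊕ β)) = ⊥ := by
      ext ⟨u, hu⟩ ⟨w, hw⟩
      simp only [SimpleGraph.comap_adj, SimpleGraph.bot_adj, iff_false]
      intro huw
      apply hB
      rcases u with a | b <;> rcases w with a' | b' <;> simp at huw
      exacts [⟨⟨a, by simpa using hu⟩, ⟨b', by simpa using hw⟩⟩,
        ⟨⟨a', by simpa using hw⟩, ⟨b, by simpa using hu⟩⟩]
    rw [hbot, SimpleGraph.connected_bot_iff, Set.subsingleton_coe, Set.nonempty_coe_sort,
      and_comm, ← Set.exists_eq_singleton_iff_nonempty_subsingleton]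
    simp [hB]

lemma IsConnPartition.eq_singleton_or_isTwoSided [Fintype α] [Fintype β] [DecidableEq α]
    [DecidableEq β] {P : Finset (Finset (α ⊕ β))}
    (hP : IsConnPartition (completeBipartiteGraph α β) P) {B : Finset (α ⊕ β)} (hB : B ∈ P) :
    (∃ v, B = {v}) ∨ IsTwoSided B :=
  induce_completeBipartiteGraph_connected_iff.1 (hP.2 B hB)

def singletonVertices {γ : Type*} [Fintype γ] [DecidableEq γ] (P : Finset (Finset γ)) :
    Finset γ :=
  {v | {v} ∈ P}

def twoSidedBlocks (P : Finset (Finset (α ⊕ β))) : Finset (Finset (α ⊕ β)) :=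
  {B ∈ P | IsTwoSided B}

lemma isTwoSided_of_mem_twoSidedBlocks {P : Finset (Finset (α ⊕ β))} {B : Finset (α ⊕ β)}
    (hB : B ∈ twoSidedBlocks P) : IsTwoSided B :=
  (mem_filter.1 hB).2

variable [DecidableEq α] [DecidableEq β] {D : Finset (α ⊕ β)} {M : Finset (Finset (α ⊕ β))}

lemma twoSidedBlocks_image_singleton_union (hM₂ : ∀ B ∈ M, IsTwoSided B) :
    twoSidedBlocks (D.image singleton ∪ M) = M := by
  rw [twoSidedBlocks, filter_union, filter_true_of_mem hM₂, filter_false_of_mem, empty_union]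
  simp only [mem_image, forall_exists_index, and_imp, forall_apply_eq_imp_iff₂]
  exact fun v _ => not_isTwoSided_singleton v

lemma card_image_singleton_union (hM₂ : ∀ B ∈ M, IsTwoSided B) :
    #(D.image singleton ∪ M) = #D + #M := by
  rw [card_union_of_disjoint, card_image_of_injective _ singleton_injective]
  simp only [disjoint_left, mem_image, forall_exists_index, and_imp, forall_apply_eq_imp_iff₂]
  exact fun v _ hv => not_isTwoSided_singleton v (hM₂ _ hv)

variable [Fintype α] [Fintype β]

lemma singletonVertices_image_singleton_union (hM₂ : ∀ B ∈ M, IsTwoSided B) :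
    singletonVertices (D.image singleton ∪ M) = D := by
  ext v
  simp only [singletonVertices, mem_filter, mem_univ, true_and, mem_union, mem_image,
    singleton_inj, exists_eq_right]
  exact or_iff_left fun hv => not_isTwoSided_singleton v (hM₂ _ hv)

lemma isConnPartition_image_singleton_union (hM : IsPartitionOn Dᶜ M)
    (hM₂ : ∀ B ∈ M, IsTwoSided B) :
    IsConnPartition (completeBipartiteGraph α β) (D.image singleton ∪ M) := by
  refine ⟨isPartition_iff_isPartitionOn_univ.2 ?_, fun B hB => ?_⟩
  · simpa [union_compl] using (isPartitionOn_image_singleton D).union hM disjoint_compl_right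
  · refine induce_completeBipartiteGraph_connected_iff.2 ?_
    rcases mem_union.1 hB with hB | hB
    · obtain ⟨v, -, rfl⟩ := mem_image.1 hB
      exact Or.inl ⟨v, rfl⟩
    · exact Or.inr (hM₂ B hB)

namespace IsConnPartition

variable {P : Finset (Finset (α ⊕ β))} (hP : IsConnPartition (completeBipartiteGraph α β) P)
include hP

lemma image_singleton_union_twoSidedBlocks :
    (singletonVertices P).image singleton ∪ twoSidedBlocks P = P := by
  ext B
  simp only [singletonVertices, twoSidedBlocks, mem_union, mem_image, mem_filter, mem_univ,
    true_and]
  constructor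
  · rintro (⟨v, hv, rfl⟩ | ⟨hB, -⟩)
    exacts [hv, hB]
  · intro hB
    rcases hP.eq_singleton_or_isTwoSided hB with ⟨v, rfl⟩ | hB₂
    exacts [Or.inl ⟨v, hB, rfl⟩, Or.inr ⟨hB, hB₂⟩]

lemma isPartitionOn_twoSidedBlocks :
    IsPartitionOn (singletonVertices P)ᶜ (twoSidedBlocks P) := by
  have hPU := isPartition_iff_isPartitionOn_univ.1 hP.1
  simp only [twoSidedBlocks, singletonVertices]
  refine ⟨fun h => hPU.1 (mem_filter.1 h).1, fun B hB v hvB => ?_, fun v hv => ?_⟩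
  · obtain ⟨hB, hB₂⟩ := mem_filter.1 hB
    simp only [mem_compl, mem_filter, mem_univ, true_and]
    intro hv
    exact not_isTwoSided_singleton v (hPU.eq_of_mem hB hv hvB (mem_singleton_self v) ▸ hB₂)
  · simp only [mem_compl, mem_filter, mem_univ, true_and] at hv
    obtain ⟨B, ⟨hB, hvB⟩, huniq⟩ := hPU.2.2 v (mem_univ v)
    have hB₂ : IsTwoSided B := by
      refine (hP.eq_singleton_or_isTwoSided hB).resolve_left ?_
      rintro ⟨w, rfl⟩
      exact hv (mem_singleton.1 hvB ▸ hB)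
    exact ⟨B, ⟨mem_filter.2 ⟨hB, hB₂⟩, hvB⟩,
      fun B' hB' => huniq B' ⟨(mem_filter.1 hB'.1).1, hB'.2⟩⟩

end IsConnPartition

end CompleteBipartite

section Sums

open Fintype

variable {α β : Type*} [Fintype α] [Fintype β]

lemma Fintype.sum_finset_sum_type {M : Type*} [AddCommMonoid M] (f : Finset (α ⊕ β) → M) :
    ∑ D, f D = ∑ A : Finset α, ∑ C : Finset β, f (A.disjSum C) := by
  rw [← sum_prod_type']
  exact sum_equiv sumEquiv.toEquiv f (fun p => f (p.1.disjSum p.2)) fun D => by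
    simp [sumEquiv, toLeft_disjSum_toRight]

lemma Fintype.sum_finset_apply_card {M : Type*} [AddCommMonoid M] (f : ℕ → M) :
    ∑ A : Finset α, f #A = ∑ i ∈ range (card α + 1), (card α).choose i • f i := by
  simpa using sum_powerset_apply_card f (x := (univ : Finset α))

lemma Fintype.sum_finset_sum_finset_apply_card {M : Type*} [AddCommMonoid M] (f : ℕ → ℕ → M) :
    ∑ A : Finset α, ∑ C : Finset β, f #A #C = ∑ i ∈ range (card α + 1),
      ∑ k ∈ range (card β + 1), (card α).choose i • (card β).choose k • f i k := by
  have inner : ∀ i, ∑ C : Finset β, f i #C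
      = ∑ k ∈ range (card β + 1), (card β).choose k • f i k :=
    fun i => sum_finset_apply_card (f i)
  simp only [inner, ← smul_sum]
  exact sum_finset_apply_card fun i => ∑ k ∈ range (card β + 1), (card β).choose k • f i k

lemma sum_range_sub_eq_sum_range_of_eq_zero {M : Type*} [AddCommMonoid M] {s t N : ℕ}
    (hN : s < N) (F : ℕ → ℕ → ℕ → M) (hF : ∀ i j k, s - i < j ∨ t - k < j → F i j k = 0) :
    ∑ i ∈ range (s + 1), ∑ j ∈ range (s - i + 1), ∑ k ∈ range (t - j + 1), F i j k
      = ∑ i ∈ range (s + 1), ∑ k ∈ range (t + 1), ∑ j ∈ range N, F i j k := by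
  refine sum_congr rfl fun i _ => ?_
  rw [sum_comm (s := range (t + 1))]
  have hk : ∀ j, ∑ k ∈ range (t - j + 1), F i j k = ∑ k ∈ range (t + 1), F i j k := fun j =>
    sum_subset (range_subset_range.2 (by omega)) fun k hk hk' =>
      hF i j k (Or.inr (by simp only [mem_range] at hk hk'; omega))
  simp only [hk]
  exact sum_subset (range_subset_range.2 (by omega)) fun j hj hj' =>
    sum_eq_zero fun k _ => hF i j k (Or.inl (by simp only [mem_range] at hj hj'; omega))

end Sums

section PartitionPolynomial

lemma mem_connParts {V : Type*} [Fintype V] [DecidableEq V] {G : SimpleGraph V}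
    {P : Finset (Finset V)} : P ∈ connParts G ↔ IsConnPartition G P := by
  simp [connParts]

variable {α β : Type*} [Fintype α] [Fintype β] [DecidableEq α] [DecidableEq β]

theorem Q_completeBipartiteGraph_eq_sum_twoSidedPartitionsOn (x : ℤ) :
    Q (completeBipartiteGraph α β) x = ∑ D : Finset (α ⊕ β),
      ∑ j ∈ range (Fintype.card (α ⊕ β) + 1),
        (#(twoSidedPartitionsOn Dᶜ j) : ℤ) * x ^ (#D + j) := by
  calc Q (completeBipartiteGraph α β) x
      = ∑ p ∈ (univ ×ˢ range (Fintype.card (α ⊕ β) + 1)).sigma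
          (fun p => twoSidedPartitionsOn p.1ᶜ p.2), x ^ (#p.1.1 + p.1.2) := by
        refine sum_nbij' (fun P => ⟨(singletonVertices P, #(twoSidedBlocks P)), twoSidedBlocks P⟩)
          (fun p => p.1.1.image singleton ∪ p.2) (fun P hP => ?_) (fun p hp => ?_)
          (fun P hP => ?_) (fun p hp => ?_) (fun P hP => ?_)
        · have hM := (mem_connParts.1 hP).isPartitionOn_twoSidedBlocks
          simp only [mem_sigma, mem_product, mem_univ, mem_range, true_and,
            mem_twoSidedPartitionsOn, and_true]
          exact ⟨Nat.lt_succ_of_le (hM.card_le.trans (card_le_univ _)), hM,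
            fun _ => isTwoSided_of_mem_twoSidedBlocks⟩
        · obtain ⟨hM, hM₂, -⟩ := mem_twoSidedPartitionsOn.1 (mem_sigma.1 hp).2
          exact mem_connParts.2 (isConnPartition_image_singleton_union hM hM₂)
        · exact (mem_connParts.1 hP).image_singleton_union_twoSidedBlocks
        · obtain ⟨⟨D, j⟩, M⟩ := p
          obtain ⟨-, hM₂, hj⟩ := mem_twoSidedPartitionsOn.1 (mem_sigma.1 hp).2
          dsimp only at hM₂ hj ⊢
          subst hj
          rw [singletonVertices_image_singleton_union hM₂,
            twoSidedBlocks_image_singleton_union hM₂]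
        · conv_lhs => rw [← (mem_connParts.1 hP).image_singleton_union_twoSidedBlocks]
          rw [card_image_singleton_union fun _ => isTwoSided_of_mem_twoSidedBlocks]
    _ = _ := by
        rw [sum_sigma, sum_product]
        simp

open Fintype in
theorem Q_completeBipartiteGraph_eq_sum_choose (x : ℤ) :
    Q (completeBipartiteGraph α β) x = ∑ i ∈ range (card α + 1), ∑ k ∈ range (card β + 1),
      ∑ j ∈ range (card α + card β + 1), ((card α).choose i : ℤ) * (card β).choose k
        * stirlingSnd (card α - i) j * stirlingSnd (card β - k) j * j.factorial
        * x ^ (i + j + k) := by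
  rw [Q_completeBipartiteGraph_eq_sum_twoSidedPartitionsOn, sum_finset_sum_type, card_sum]
  simp only [card_twoSidedPartitionsOn, compl_disjSum, toLeft_disjSum, toRight_disjSum,
    card_compl, card_disjSum]
  rw [sum_finset_sum_finset_apply_card fun i k => ∑ j ∈ range (card α + card β + 1),
    ((stirlingSnd (card α - i) j * stirlingSnd (card β - k) j * j.factorial : ℕ) : ℤ)
      * x ^ (i + k + j)]
  refine sum_congr rfl fun i _ => sum_congr rfl fun k _ => ?_
  rw [smul_sum, smul_sum]
  refine sum_congr rfl fun j _ => ?_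
  simp only [nsmul_eq_mul]
  push_cast
  ring

end PartitionPolynomial

/-- The partition polynomial of the complete bipartite graph `K_{s,t}`. -/
theorem completeBipartite_partition_polynomial (s t : ℕ) (x : ℤ) :
    Q (completeBipartiteGraph (Fin s) (Fin t)) x
      = ∑ i ∈ Finset.range (s + 1), ∑ j ∈ Finset.range (s - i + 1),
          ∑ k ∈ Finset.range (t - j + 1),
            (s.choose i : ℤ) * (t.choose k : ℤ) * (stirlingSnd (s - i) j : ℤ)
              * (stirlingSnd (t - k) j : ℤ) * (Nat.factorial j : ℤ)
              * x ^ (i + j + k) := by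
  rw [sum_range_sub_eq_sum_range_of_eq_zero (N := s + t + 1) (by omega) (fun i j k =>
    (s.choose i : ℤ) * (t.choose k : ℤ) * (stirlingSnd (s - i) j : ℤ)
      * (stirlingSnd (t - k) j : ℤ) * (Nat.factorial j : ℤ) * x ^ (i + j + k))]
  · simpa using Q_completeBipartiteGraph_eq_sum_choose (α := Fin s) (β := Fin t) x
  · rintro i j k (h | h) <;> simp [stirlingSnd_eq_zero_of_lt h]
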